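/- On the first Heisenberg group ℍ¹ = ℝ³ with group law (x,y,t)(x',y',t') = (x+x', y+y', t+t'+(xy'-x'y)/2) and distance d̃(a,b) = ‖a⁻¹ b‖ where ‖(x,y,t)‖ = ((x²+y²)² + t²)^{1/4}, the function f defined on A = (ℝ²×{0}) ∪ ({(0,0)}×ℝ) by f(x,y,0) = 0 and f(0,0,t) = √|t| is Lipschitz on A with respect to the restriction of d̃. -/
import Mathlib


/-- The Korányi-type homogeneous norm on the first Heisenberg group `ℝ³`. -/
noncomputable def heisNorm (p : ℝ × ℝ × ℝ) : ℝ :=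
  ((p.1 ^ 2 + p.2.1 ^ 2) ^ 2 + p.2.2 ^ 2) ^ ((1 : ℝ) / 4)

/-- The group law of the first Heisenberg group on `ℝ³`. -/
noncomputable def heisMul (a b : ℝ × ℝ × ℝ) : ℝ × ℝ × ℝ :=
  (a.1 + b.1, a.2.1 + b.2.1, a.2.2 + b.2.2 + (a.1 * b.2.1 - b.1 * a.2.1) / 2)

/-- The group inverse in the first Heisenberg group. -/
def heisInv (a : ℝ × ℝ × ℝ) : ℝ × ℝ × ℝ := (-a.1, -a.2.1, -a.2.2)

/-- The homogeneous distance `d̃(a,b) = ‖a⁻¹ b‖` on the first Heisenberg group. -/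
noncomputable def heisDist (a b : ℝ × ℝ × ℝ) : ℝ := heisNorm (heisMul (heisInv a) b)

/-- The set `A = (ℝ² × {0}) ∪ ({(0,0)} × ℝ)`. -/
def heisA : Set (ℝ × ℝ × ℝ) :=
  {p | p.2.2 = 0} ∪ {p | p.1 = 0 ∧ p.2.1 = 0}

/-- The function `f(x,y,0) = 0`, `f(0,0,t) = √|t|` on `A`. -/
noncomputable def heisF (p : ℝ × ℝ × ℝ) : ℝ := Real.sqrt |p.2.2|

lemma aux_sqrt_sub (x y : ℝ) (hy : 0 ≤ y) (h : y ≤ x) :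
    Real.sqrt x - Real.sqrt y ≤ Real.sqrt (x - y) := by
  have h3 : Real.sqrt x ≤ Real.sqrt y + Real.sqrt (x - y) := by
    have : Real.sqrt x ≤ Real.sqrt ((Real.sqrt y + Real.sqrt (x - y))^2) := by
      apply Real.sqrt_le_sqrt
      nlinarith [Real.sq_sqrt hy, Real.sq_sqrt (by linarith : (0:ℝ) ≤ x - y),
        mul_nonneg (Real.sqrt_nonneg y) (Real.sqrt_nonneg (x - y))]
    rwa [Real.sqrt_sq (by positivity)] at this
  linarith

lemma aux_sqrt_abs (s t : ℝ) :
    abs (Real.sqrt |s| - Real.sqrt |t|) ≤ Real.sqrt |s - t| := by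
  have key : ∀ u v : ℝ, Real.sqrt |u| - Real.sqrt |v| ≤ Real.sqrt |u - v| := by
    intro u v
    rcases le_total |u| |v| with h | h
    · have h1 := Real.sqrt_le_sqrt h
      have h2 := Real.sqrt_nonneg |u - v|
      linarith
    · calc Real.sqrt |u| - Real.sqrt |v| ≤ Real.sqrt (|u| - |v|) :=
            aux_sqrt_sub _ _ (abs_nonneg v) h
        _ ≤ Real.sqrt |u - v| := Real.sqrt_le_sqrt (abs_sub_abs_le_abs_sub u v)
  rw [abs_sub_le_iff]
  exact ⟨key s t, by rw [abs_sub_comm]; exact key t s⟩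

lemma aux_norm (p : ℝ × ℝ × ℝ) : Real.sqrt |p.2.2| ≤ heisNorm p := by
  have h1 : Real.sqrt |p.2.2| = (p.2.2 ^ 2) ^ ((1:ℝ)/4) := by
    rw [show ((1:ℝ)/4) = (1/2) * (1/2) by norm_num, Real.rpow_mul (sq_nonneg _),
      ← Real.sqrt_eq_rpow, ← Real.sqrt_eq_rpow, Real.sqrt_sq_eq_abs]
  rw [h1, heisNorm]
  exact Real.rpow_le_rpow (sq_nonneg _) (le_add_of_nonneg_left (sq_nonneg _)) (by norm_num)

theorem stmt_7 :
    ∃ C : ℝ, 0 < C ∧ ∀ a ∈ heisA, ∀ b ∈ heisA,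
      |heisF a - heisF b| ≤ C * heisDist a b := by
  refine ⟨1, one_pos, ?_⟩
  intro a ha b hb
  rw [one_mul]
  set q := heisMul (heisInv a) b with hq
  have hd : heisDist a b = heisNorm q := rfl
  have hb2 : Real.sqrt |q.2.2| ≤ heisDist a b := hd ▸ aux_norm q
  have hmain : |heisF a - heisF b| ≤ Real.sqrt |q.2.2| := by
    simp only [heisA, Set.mem_union, Set.mem_setOf_eq] at ha hb
    rcases ha with ha | ⟨ha1, ha2⟩
    · rcases hb with hb | ⟨hb1, hb2'⟩
      · simp only [heisF, ha, hb, abs_zero, Real.sqrt_zero, sub_self]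
        exact Real.sqrt_nonneg _
      · have hT : q.2.2 = b.2.2 - a.2.2 := by
          simp [hq, heisMul, heisInv, hb1, hb2']; ring
        rw [heisF, heisF, hT, abs_sub_comm b.2.2 a.2.2]
        exact aux_sqrt_abs a.2.2 b.2.2
    · have hT : q.2.2 = b.2.2 - a.2.2 := by
        simp [hq, heisMul, heisInv, ha1, ha2]; ring
      rw [heisF, heisF, hT, abs_sub_comm b.2.2 a.2.2]
      exact aux_sqrt_abs a.2.2 b.2.2
  exact hmain.trans hb2
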